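/- arXiv:2109.00712 — 2 statements merged into one kernel-verified Lean document; each statement's English description precedes it below -/
import Mathlib

section
/- Let θ: X → ℝ be the covariate-specific treatment effect in the model g(E[Y|A,X]) = μ(X) + θ(X)·A with g strictly increasing, and let d^opt(x) = 1{θ(x) > 0}. Then the value difference Δ = V(d^opt) − V(0) satisfies: Δ = 0 if θ(x) ≤ 0 for almost all x, and Δ > 0 if there exists a set X_0 with P(X ∈ X_0) > 0 and θ(x) > 0 for all x ∈ X_0. Hence the hypotheses H_0: θ ≤ 0 a.s. versus H_1: P(θ(X) > 0) > 0 are equivalent to H_0: Δ = 0 versus H_1: Δ > 0. -/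
open MeasureTheory

/-- Equivalence of the subgroup hypotheses with the value-difference hypotheses:
with `d^opt(x) = 1{θ(x) > 0}` and `Δ = V(d^opt) − V(0)`, we have `Δ = 0` when
`θ ≤ 0` a.e., and `Δ > 0` when a subgroup of positive probability has `θ > 0`.
Here `G = g⁻¹` is the (strictly increasing) inverse link. -/
theorem subgroup_hypotheses_value_difference_equivalence
    {𝒳 : Type*} [MeasurableSpace 𝒳] (ν : Measure 𝒳) [IsProbabilityMeasure ν]
    (μf θ : 𝒳 → ℝ) (hμf : Measurable μf) (hθ : Measurable θ)
    (G : ℝ → ℝ) (hG : StrictMono G)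
    (hint1 : Integrable (fun x => G (μf x + θ x * (if 0 < θ x then 1 else 0))) ν)
    (hint0 : Integrable (fun x => G (μf x)) ν)
    (Δ : ℝ)
    (hΔ : Δ = (∫ x, G (μf x + θ x * (if 0 < θ x then 1 else 0)) ∂ν)
      - ∫ x, G (μf x) ∂ν) :
    ((∀ᵐ x ∂ν, θ x ≤ 0) → Δ = 0) ∧
    ((∃ S : Set 𝒳, MeasurableSet S ∧ 0 < ν S ∧ ∀ x ∈ S, 0 < θ x) → 0 < Δ) := by
  constructor
  · intro h
    have : (∫ x, G (μf x + θ x * (if 0 < θ x then 1 else 0)) ∂ν)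
        = ∫ x, G (μf x) ∂ν := by
      apply integral_congr_ae
      filter_upwards [h] with x hx
      rw [if_neg (not_lt.mpr hx)]
      ring_nf
    rw [hΔ, this, sub_self]
  · rintro ⟨S, hS, hSpos, hSθ⟩
    rw [hΔ, sub_pos]
    set f : 𝒳 → ℝ := fun x => G (μf x + θ x * (if 0 < θ x then 1 else 0)) - G (μf x)
      with hf
    have hnonneg : ∀ x, 0 ≤ f x := by
      intro x
      simp only [hf, sub_nonneg]
      by_cases hx : 0 < θ x
      · exact (hG.le_iff_le).mpr (by simp [hx]; linarith)
      · simp [hx]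
    have hfint : Integrable f ν := hint1.sub hint0
    have hpos : 0 < ∫ x, f x ∂ν := by
      rw [integral_pos_iff_support_of_nonneg hnonneg hfint]
      refine lt_of_lt_of_le hSpos (measure_mono ?_)
      intro x hx
      have hθx := hSθ x hx
      simp only [Function.mem_support, hf]
      have : G (μf x) < G (μf x + θ x * (if 0 < θ x then 1 else 0)) := by
        apply hG; simp [hθx]
      exact ne_of_gt (sub_pos.mpr this)
    have := integral_sub hint1 hint0
    simp only [hf] at hpos
    rw [this] at hpos
    linarith
end

section
/- Let φ_{(μ,σ²)} denote the N(μ,σ²) density and let π be the density of a half-normal prior, π(Δ) = (2/√(2πτ²))·exp(−Δ²/(2τ²))·1{Δ>0}. Then for any real r, any positive constants s and k, ∫_0^∞ [φ_{(sΔ/√k, 1)}(r)/φ_{(0,1)}(r)] π(Δ) dΔ = 2·√(k/(k + τ²s²))·exp( (τ s r)²/(2(τ²s² + k)) )·(1 − F(0)), where F is the CDF of a normal distribution with mean √k·s·r·τ²/(τ²s² + k) and variance kτ²/(τ²s² + k). -/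
open MeasureTheory Real NNReal

/-- The density of a `N(m, v)` distribution (variance `v`). -/
noncomputable def normalPDF (m v x : ℝ) : ℝ :=
  (1 / Real.sqrt (2 * Real.pi * v)) * Real.exp (-(x - m) ^ 2 / (2 * v))

theorem normalPDF_eq (m : ℝ) (v : ℝ≥0) :
    normalPDF m v = ProbabilityTheory.gaussianPDFReal m v := by
  ext x
  simp [normalPDF, ProbabilityTheory.gaussianPDFReal, one_div, neg_div]

theorem normalPDF_split (m v : ℝ) (hv : 0 < v) :
    ∫ x in Set.Ioi (0:ℝ), normalPDF m v x
      = 1 - ∫ x in Set.Iic (0:ℝ), normalPDF m v x := by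
  lift v to ℝ≥0 using hv.le with v hv'
  have hv0 : v ≠ 0 := by
    intro h; rw [h] at hv; simp at hv
  rw [normalPDF_eq]
  have h := intervalIntegral.integral_Iic_add_Ioi (b := (0:ℝ))
    (f := ProbabilityTheory.gaussianPDFReal m v)
    ((ProbabilityTheory.integrable_gaussianPDFReal m v).integrableOn)
    ((ProbabilityTheory.integrable_gaussianPDFReal m v).integrableOn)
  rw [ProbabilityTheory.integral_gaussianPDFReal_eq_one m hv0] at h
  linarith

theorem subtle_pointwise (r s k τ Δ : ℝ) (hs : 0 < s) (hk : 0 < k) (hτ : 0 < τ) :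
    (normalPDF (s * Δ / Real.sqrt k) 1 r / normalPDF 0 1 r) *
      ((2 / Real.sqrt (2 * Real.pi * τ ^ 2)) * Real.exp (-Δ ^ 2 / (2 * τ ^ 2)))
    = (2 * Real.sqrt (k / (k + τ ^ 2 * s ^ 2)) *
        Real.exp ((τ * s * r) ^ 2 / (2 * (τ ^ 2 * s ^ 2 + k)))) *
      normalPDF (Real.sqrt k * s * r * τ ^ 2 / (τ ^ 2 * s ^ 2 + k))
        (k * τ ^ 2 / (τ ^ 2 * s ^ 2 + k)) Δ := by
  have ha : 0 < τ ^ 2 * s ^ 2 + k := by positivity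
  set t := Real.sqrt k with ht
  have htpos : 0 < t := Real.sqrt_pos.mpr hk
  have ht2 : t ^ 2 = k := Real.sq_sqrt hk.le
  unfold normalPDF
  have hcoef : Real.sqrt (k / (k + τ ^ 2 * s ^ 2)) *
      (1 / Real.sqrt (2 * Real.pi * (k * τ ^ 2 / (τ ^ 2 * s ^ 2 + k))))
      = 1 / Real.sqrt (2 * Real.pi * τ ^ 2) := by
    rw [div_eq_mul_inv (1:ℝ), div_eq_mul_inv (1:ℝ), one_mul, one_mul,
      ← Real.sqrt_inv, ← Real.sqrt_mul (by positivity), ← Real.sqrt_inv]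
    congr 1
    field_simp
    ring
  have hA : (1 / Real.sqrt (2 * Real.pi * 1)) ≠ 0 := by positivity
  rw [mul_div_mul_left _ _ hA, ← Real.exp_sub]
  have hexp : -(r - s * Δ / t) ^ 2 / (2 * 1) - (-(r - 0) ^ 2 / (2 * 1)) +
      -Δ ^ 2 / (2 * τ ^ 2)
      = (τ * s * r) ^ 2 / (2 * (τ ^ 2 * s ^ 2 + k)) +
        -(Δ - t * s * r * τ ^ 2 / (τ ^ 2 * s ^ 2 + k)) ^ 2 /
          (2 * (k * τ ^ 2 / (τ ^ 2 * s ^ 2 + k))) := by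
    rw [← ht2] at *
    field_simp
    ring
  calc Real.exp (-(r - s * Δ / t) ^ 2 / (2 * 1) - -(r - 0) ^ 2 / (2 * 1)) *
      (2 / Real.sqrt (2 * Real.pi * τ ^ 2) * Real.exp (-Δ ^ 2 / (2 * τ ^ 2)))
      = 2 * (1 / Real.sqrt (2 * Real.pi * τ ^ 2)) *
        Real.exp ((-(r - s * Δ / t) ^ 2 / (2 * 1) - -(r - 0) ^ 2 / (2 * 1)) +
          -Δ ^ 2 / (2 * τ ^ 2)) := by rw [Real.exp_add]; ring
    _ = _ := by rw [hexp, ← hcoef, Real.exp_add]; ring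

/-- Closed form of the SUBTLE test statistic: mixing the Gaussian probability
ratio over a half-normal prior with scale `τ` yields
`2·√(k/(k+τ²s²))·exp((τsr)²/(2(τ²s²+k)))·(1 − F(0))`, where `F` is the CDF of
`N(√k·s·r·τ²/(τ²s²+k), kτ²/(τ²s²+k))`. -/
theorem subtle_test_statistic_closed_form
    (r s k τ : ℝ) (hs : 0 < s) (hk : 0 < k) (hτ : 0 < τ) :
    ∫ Δ in Set.Ioi (0 : ℝ),
        (normalPDF (s * Δ / Real.sqrt k) 1 r / normalPDF 0 1 r) *
          ((2 / Real.sqrt (2 * Real.pi * τ ^ 2)) * Real.exp (-Δ ^ 2 / (2 * τ ^ 2)))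
      = 2 * Real.sqrt (k / (k + τ ^ 2 * s ^ 2)) *
          Real.exp ((τ * s * r) ^ 2 / (2 * (τ ^ 2 * s ^ 2 + k))) *
          (1 - ∫ x in Set.Iic (0 : ℝ),
            normalPDF (Real.sqrt k * s * r * τ ^ 2 / (τ ^ 2 * s ^ 2 + k))
              (k * τ ^ 2 / (τ ^ 2 * s ^ 2 + k)) x) := by
  have ha : 0 < τ ^ 2 * s ^ 2 + k := by positivity
  have hv : 0 < k * τ ^ 2 / (τ ^ 2 * s ^ 2 + k) := by positivity
  calc ∫ Δ in Set.Ioi (0 : ℝ),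
        (normalPDF (s * Δ / Real.sqrt k) 1 r / normalPDF 0 1 r) *
          ((2 / Real.sqrt (2 * Real.pi * τ ^ 2)) * Real.exp (-Δ ^ 2 / (2 * τ ^ 2)))
      = ∫ Δ in Set.Ioi (0 : ℝ),
          (2 * Real.sqrt (k / (k + τ ^ 2 * s ^ 2)) *
            Real.exp ((τ * s * r) ^ 2 / (2 * (τ ^ 2 * s ^ 2 + k)))) *
          normalPDF (Real.sqrt k * s * r * τ ^ 2 / (τ ^ 2 * s ^ 2 + k))
            (k * τ ^ 2 / (τ ^ 2 * s ^ 2 + k)) Δ := by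
        exact integral_congr_ae (Filter.Eventually.of_forall fun Δ =>
          subtle_pointwise r s k τ Δ hs hk hτ)
    _ = (2 * Real.sqrt (k / (k + τ ^ 2 * s ^ 2)) *
          Real.exp ((τ * s * r) ^ 2 / (2 * (τ ^ 2 * s ^ 2 + k)))) *
        ∫ Δ in Set.Ioi (0 : ℝ),
          normalPDF (Real.sqrt k * s * r * τ ^ 2 / (τ ^ 2 * s ^ 2 + k))
            (k * τ ^ 2 / (τ ^ 2 * s ^ 2 + k)) Δ := integral_const_mul _ _
    _ = _ := by rw [normalPDF_split _ _ hv]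
end
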